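/- arXiv:0807.2016 — 3 statements merged into one kernel-verified Lean document; each statement's English description precedes it below -/
import Mathlib

section
/- Let G be a finite group, let N_G be the subgroup generated by all minimal nontrivial normal abelian subgroups N_1, ..., N_k of G, and let L be a subgroup of N_G that is normal in G. Then there exists a subset S of {N_1, ..., N_k} such that N_G is the internal direct product of L and the (internal direct) product M of the members of S; in particular L ∩ M = {e} and N_G = L·M. -/
open scoped Pointwise


/-- `N` is a minimal nontrivial normal abelian subgroup of `G`. -/
def IsMinNormalAbelian {G : Type*} [Group G] (N : Subgroup G) : Prop :=
  N.Normal ∧ N ≠ ⊥ ∧ (∀ a b : N, a * b = b * a) ∧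
    ∀ N' : Subgroup G, N'.Normal → N' ≠ ⊥ → (∀ a b : N', a * b = b * a) →
      N' ≤ N → N' = N

/-- The `sSup` of a set of normal subgroups is normal. -/
lemma sSup_normal_aux {G : Type*} [Group G] {S : Set (Subgroup G)}
    (h : ∀ N ∈ S, N.Normal) : (sSup S).Normal := by
  constructor
  intro n hn g
  have key : sSup S ≤ Subgroup.comap (MulAut.conj g).toMonoidHom (sSup S) := by
    apply sSup_le
    intro N hN x hx
    have : (MulAut.conj g) x ∈ N := (h N hN).conj_mem x hx g
    exact Subgroup.mem_comap.2 (le_sSup hN this)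
  have := key hn
  simpa using this

/-- Let `N_G` be the subgroup generated by the minimal nontrivial normal abelian
subgroups of `G` and `L ≤ N_G` a subgroup normal in `G`.  Then there is a set `S`
of minimal nontrivial normal abelian subgroups such that, with `M := sSup S`,
`N_G` is the (internal direct) product of `L` and `M`: `L ⊓ M = ⊥` and every
element of `N_G` is a product `l * m`. -/
theorem NG_direct_complement {G : Type*} [Group G] [Finite G]
    (NG : Subgroup G) (hNG : NG = sSup {N : Subgroup G | IsMinNormalAbelian N})
    (L : Subgroup G) (hL : L ≤ NG) (hLnorm : L.Normal) :
    ∃ S : Set (Subgroup G), S ⊆ {N : Subgroup G | IsMinNormalAbelian N} ∧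
      L ⊓ sSup S = ⊥ ∧
      (∀ x ∈ NG, ∃ l ∈ L, ∃ m ∈ sSup S, x = l * m) := by
  classical
  -- Consider the collection of candidate subgroups M = sSup S with L ⊓ M = ⊥.
  set 𝒮 : Set (Set (Subgroup G)) :=
    {S | S ⊆ {N : Subgroup G | IsMinNormalAbelian N} ∧ L ⊓ sSup S = ⊥} with h𝒮
  have hempty : (∅ : Set (Subgroup G)) ∈ 𝒮 := by
    constructor
    · exact Set.empty_subset _
    · simp
  -- pick S maximizing sSup S
  obtain ⟨S, hS, hmax⟩ := Set.Finite.exists_maximalFor (fun S => sSup S) 𝒮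
    (Set.toFinite _) ⟨∅, hempty⟩
  obtain ⟨hSsub, hSinf⟩ := hS
  set M := sSup S with hM
  have hMnorm : M.Normal := sSup_normal_aux (fun N hN => (hSsub hN).1)
  refine ⟨S, hSsub, hSinf, ?_⟩
  -- Key claim : NG ≤ L ⊔ M
  have hLM : (L ⊔ M).Normal := by
    have := hLnorm; have := hMnorm
    exact Subgroup.sup_normal L M
  have key : NG ≤ L ⊔ M := by
    rw [hNG]
    apply sSup_le
    intro N hN
    by_contra hNle
    obtain ⟨hNnorm, hNne, hNab, hNmin⟩ := hN
    -- N ⊓ (L ⊔ M) is normal abelian ≤ N, hence ⊥ or N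
    have hint : N ⊓ (L ⊔ M) = ⊥ := by
      by_contra hbot
      have : N ⊓ (L ⊔ M) = N := by
        apply hNmin
        · have := hNnorm; have := hLM
          exact Subgroup.normal_inf_normal N (L ⊔ M)
        · exact hbot
        · intro a b
          exact Subtype.ext (by
            simpa using congrArg Subtype.val (hNab ⟨a, a.2.1⟩ ⟨b, b.2.1⟩))
        · exact inf_le_left
      exact hNle (this ▸ inf_le_right)
    -- Then S ∪ {N} is in 𝒮, contradicting maximality
    have hins : insert N S ∈ 𝒮 := by
      constructor
      · intro K hK
        rcases hK with h | h
        · subst h; exact ⟨hNnorm, hNne, hNab, hNmin⟩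
        · exact hSsub h
      · -- L ⊓ (M ⊔ N) = ⊥
        rw [sSup_insert]
        rw [eq_bot_iff]
        intro x hx
        obtain ⟨hxL, hxMN⟩ := Subgroup.mem_inf.1 hx
        -- x ∈ N ⊔ M = N * M
        have : x ∈ ((N : Set G) * (M : Set G)) := by
          rw [← Subgroup.mul_normal N M]
          exact hxMN
        obtain ⟨n, hn, m, hm, hx⟩ := this
        have hnmem : n = x * m⁻¹ := by rw [← hx]; group
        have hnLM : n ∈ L ⊔ M := by
          rw [hnmem]
          exact mul_mem ((le_sup_left : L ≤ L ⊔ M) hxL)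
            ((le_sup_right : M ≤ L ⊔ M) (inv_mem hm))
        have hn1 : n = 1 := by
          have : n ∈ N ⊓ (L ⊔ M) := ⟨hn, hnLM⟩
          rw [hint] at this
          exact this
        have hxM : x ∈ M := by
          rw [← hx, hn1]; simpa using hm
        have : x ∈ L ⊓ M := ⟨hxL, hxM⟩
        rw [hSinf] at this
        exact this
    have := hmax hins (by beta_reduce; rw [sSup_insert]; exact le_sup_right)
    have hNM : N ≤ M := by
      have : sSup (insert N S) = M := le_antisymm this (by rw [sSup_insert]; exact le_sup_right)
      rw [sSup_insert] at this
      rw [← this]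
      exact le_sup_left
    exact hNle (le_trans hNM le_sup_right)
  -- conclude
  intro x hx
  have : x ∈ L ⊔ M := key hx
  have : x ∈ ((L : Set G) * (M : Set G)) := by
    rw [← Subgroup.mul_normal L M]
    exact this
  obtain ⟨l, hl, m, hm, hx'⟩ := this
  exact ⟨l, hl, m, hm, hx'.symm⟩
end

section
/- Let G be a finite group with Z(G) ∩ [G,G] = {e}. Then every group homomorphism (character) χ : Z(G) → ℂ* extends to a group homomorphism G → ℂ*. -/
open CategoryTheory

noncomputable instance : RootableBy ℂˣ ℕ :=
  rootableByOfPowLeftSurj _ _ fun {n} hn x => by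
    obtain ⟨z, hz⟩ := IsAlgClosed.exists_pow_nat_eq (x : ℂ) (Nat.pos_of_ne_zero hn)
    have hz0 : z ≠ 0 := by
      rintro rfl
      exact x.ne_zero (by simpa [zero_pow hn] using hz.symm)
    exact ⟨Units.mk0 z hz0, Units.ext (by simpa using hz)⟩

noncomputable instance : RootableBy ℂˣ ℤ := Group.rootableByIntOfRootableByNat _

noncomputable instance Additive.instDivisibleBy {M : Type*} [Group M] [RootableBy M ℤ] :
    DivisibleBy (Additive M) ℤ where
  div a n := Additive.ofMul (RootableBy.root a.toMul n)
  div_zero a := congrArg Additive.ofMul (RootableBy.root_zero a.toMul)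
  div_cancel a hn := congrArg Additive.ofMul (RootableBy.root_cancel a.toMul hn)

/-- Characters into `ℂˣ` extend from subgroups of commutative groups. -/
theorem extend_char_commGroup {A : Type*} [CommGroup A] (H : Subgroup A)
    (f : H →* ℂˣ) : ∃ g : A →* ℂˣ, ∀ x : H, g (x : A) = f x := by
  let Z := AddCommGrpCat.of (Additive (ULift.{_, 0} ℂˣ))
  haveI : Injective Z := AddCommGrpCat.injective_of_divisible _
  let i0 : Additive H →+ Additive A := MonoidHom.toAdditive H.subtype
  let i : AddCommGrpCat.of (Additive H) ⟶ AddCommGrpCat.of (Additive A) := AddCommGrpCat.ofHom i0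
  haveI : Mono i := by
    refine (AddCommGrpCat.mono_iff_injective i).2 fun a b hab => ?_
    have h2 : Additive.toMul (i0 a) = Additive.toMul (i0 b) := congrArg Additive.toMul hab
    exact congrArg Additive.ofMul (Subtype.ext h2)
  let f0 : Additive H →+ Additive (ULift.{_, 0} ℂˣ) :=
    MonoidHom.toAdditive ((MulEquiv.ulift.symm.toMonoidHom).comp f)
  let f' : AddCommGrpCat.of (Additive H) ⟶ Z := AddCommGrpCat.ofHom f0
  let g' := Injective.factorThru f' i
  have hg : i ≫ g' = f' := Injective.comp_factorThru f' i
  refine ⟨MulEquiv.ulift.toMonoidHom.comp (MonoidHom.toAdditive.symm g'.hom), fun x => ?_⟩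
  have key : g' (i0 (Additive.ofMul x)) = f0 (Additive.ofMul x) := by
    have h3 := congrArg (fun φ => φ.hom (Additive.ofMul x)) hg
    exact h3
  have key2 : g' (Additive.ofMul (x : A)) =
      Additive.ofMul (MulEquiv.ulift.symm (f x)) := key
  show MulEquiv.ulift (Additive.toMul (g' (Additive.ofMul (x : A)))) = f x
  rw [key2]
  simp

/-- If `Z(G) ∩ [G,G] = {e}` for a finite group `G`, then every character
`χ : Z(G) → ℂ*` extends to a character of `G`. -/
theorem character_of_center_extends
    {G : Type*} [Group G] [Finite G]
    (h : Subgroup.center G ⊓ commutator G = ⊥)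
    (χ : Subgroup.center G →* ℂˣ) :
    ∃ χ' : G →* ℂˣ, ∀ z : Subgroup.center G, χ' (z : G) = χ z := by
  classical
  let φ : Subgroup.center G →* Abelianization G :=
    Abelianization.of.comp (Subgroup.center G).subtype
  have hφ : Function.Injective φ := by
    rw [← MonoidHom.ker_eq_bot_iff]
    ext ⟨x, hx⟩
    simp only [MonoidHom.mem_ker, Subgroup.mem_bot]
    constructor
    · intro hker
      have hxc : x ∈ commutator G := by
        have : Abelianization.of x = 1 := hker
        rwa [← QuotientGroup.ker_mk' (commutator G), MonoidHom.mem_ker]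
      have : x ∈ Subgroup.center G ⊓ commutator G := ⟨hx, hxc⟩
      rw [h] at this
      exact Subtype.ext (by simpa using this)
    · intro h1; rw [h1]; exact map_one φ
  -- push χ along φ to φ.range, extend from there
  let e : Subgroup.center G ≃* φ.range := MonoidHom.ofInjective hφ
  obtain ⟨g, hg⟩ := extend_char_commGroup φ.range (χ.comp e.symm.toMonoidHom)
  refine ⟨g.comp Abelianization.of, fun z => ?_⟩
  have h1 : (e z : Abelianization G) = φ z := MonoidHom.ofInjective_apply hφ
  have h2 : g (φ z) = χ (e.symm (e z)) := by
    rw [← h1]; exact hg (e z)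
  exact (by simpa [MulEquiv.symm_apply_apply] using h2 : g (φ z) = χ z)
end

section
/- Let p be a prime, ℓ > 1, and let α be an automorphism of ℤ/p^ℓℤ of order p^d with d < ℓ. For k ≥ d form the semidirect product G = ℤ/p^kℤ ⋉ ℤ/p^ℓℤ where the generator of ℤ/p^kℤ acts by α. If d < k (i.e., the order of α is strictly less than p^k), then G has no faithful irreducible complex representation. -/
/-- A representation is irreducible if `V` is nontrivial and the only invariant
submodules are `⊥` and `⊤`. -/
def RepIrreducible {k G V : Type*} [CommSemiring k] [Monoid G] [AddCommMonoid V]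
    [Module k V] (ρ : Representation k G V) : Prop :=
  ∀ p : Submodule k V, (∀ (g : G) (v : V), v ∈ p → ρ g v ∈ p) → p = ⊥ ∨ p = ⊤

section Aux

lemma aux_ofAdd_pow (n : ℕ) (x : ZMod n) (m : ℕ) :
    (Multiplicative.ofAdd x) ^ m = Multiplicative.ofAdd ((m : ZMod n) * x) := by
  have : (m : ZMod n) * x = m • x := by simp [nsmul_eq_mul]
  rw [this, ofAdd_nsmul]

/-- Any element of `p`-power order in `ZMod (p^ℓ)` killed by `p` is a multiple of
`p^(ℓ-1)`. -/
lemma aux_exists_pow (p ℓ : ℕ) (hp : p.Prime) (hℓ : 1 ≤ ℓ)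
    (y : Multiplicative (ZMod (p ^ ℓ))) (hy : y ^ p = 1) :
    ∃ c : ℕ, y = (Multiplicative.ofAdd ((p ^ (ℓ - 1) : ℕ) : ZMod (p ^ ℓ))) ^ c := by
  haveI : NeZero (p ^ ℓ) := ⟨pow_ne_zero _ hp.ne_zero⟩
  set x : ZMod (p ^ ℓ) := Multiplicative.toAdd y with hx
  have hxv : ((x.val : ℕ) : ZMod (p ^ ℓ)) = x := ZMod.natCast_zmod_val x
  have h0 : ((p * x.val : ℕ) : ZMod (p ^ ℓ)) = 0 := by
    push_cast
    rw [hxv]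
    have : y ^ p = Multiplicative.ofAdd (p • x) := by
      rw [ofAdd_nsmul]; congr 1
    rw [this] at hy
    have := Multiplicative.toAdd.injective (α := ZMod (p ^ ℓ))
    have h2 : (p • x) = 0 := by
      have := congrArg Multiplicative.toAdd hy
      simpa using this
    simpa [nsmul_eq_mul] using h2
  have hdvd : p ^ ℓ ∣ p * x.val := (ZMod.natCast_eq_zero_iff _ _).1 h0
  have hsplit : p ^ ℓ = p * p ^ (ℓ - 1) := by
    conv_lhs => rw [show ℓ = 1 + (ℓ - 1) by omega]
    rw [pow_add, pow_one]
  have hdvd2 : p * p ^ (ℓ - 1) ∣ p * x.val := by rw [← hsplit]; exact hdvd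
  have hdvd' : p ^ (ℓ - 1) ∣ x.val :=
    (mul_dvd_mul_iff_left (by exact_mod_cast hp.ne_zero : (p : ℕ) ≠ 0)).1 hdvd2
  obtain ⟨c, hc⟩ := hdvd'
  refine ⟨c, ?_⟩
  rw [aux_ofAdd_pow]
  have : ((c : ZMod (p ^ ℓ)) * ((p ^ (ℓ - 1) : ℕ) : ZMod (p ^ ℓ))) = x := by
    rw [← hxv, hc]; push_cast; ring
  rw [this, hx]
  simp

lemma aux_ofAdd_pow_p (p m : ℕ) (hm : 1 ≤ m) :
    (Multiplicative.ofAdd ((p ^ (m - 1) : ℕ) : ZMod (p ^ m))) ^ p = 1 := by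
  rw [aux_ofAdd_pow]
  have h : ((p : ℕ) : ZMod (p ^ m)) * ((p ^ (m - 1) : ℕ) : ZMod (p ^ m))
      = ((p ^ m : ℕ) : ZMod (p ^ m)) := by
    rw [← Nat.cast_mul]
    congr 1
    conv_rhs => rw [show m = 1 + (m - 1) by omega]
    rw [pow_add, pow_one]
  rw [h, ZMod.natCast_self]
  rfl

lemma aux_ofAdd_ne_one (p m : ℕ) (hp : p.Prime) (hm : 1 ≤ m) :
    (Multiplicative.ofAdd ((p ^ (m - 1) : ℕ) : ZMod (p ^ m))) ≠ 1 := by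
  intro h
  have h2 : ((p ^ (m - 1) : ℕ) : ZMod (p ^ m)) = 0 := by
    have := congrArg Multiplicative.toAdd h
    simpa using this
  have := (ZMod.natCast_eq_zero_iff _ _).1 h2
  have := (Nat.pow_dvd_pow_iff_le_right hp.one_lt).1 this
  omega

lemma central_scalar {G : Type*} [Group G] {V : Type} [AddCommGroup V] [Module ℂ V]
    [FiniteDimensional ℂ V] [Nontrivial V] (ρ : Representation ℂ G V)
    (hirr : RepIrreducible ρ) (z : G) (hz : ∀ g, z * g = g * z) :
    ∃ c : ℂ, ∀ v, ρ z v = c • v := by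
  obtain ⟨c, hc⟩ := Module.End.exists_eigenvalue (ρ z)
  refine ⟨c, ?_⟩
  have hinv : ∀ (g : G) (v : V), v ∈ Module.End.eigenspace (ρ z) c →
      ρ g v ∈ Module.End.eigenspace (ρ z) c := by
    intro g v hv
    rw [Module.End.mem_eigenspace_iff] at hv ⊢
    have hcomm : ρ z (ρ g v) = ρ g (ρ z v) := by
      rw [← Module.End.mul_apply, ← map_mul, hz, map_mul, Module.End.mul_apply]
    rw [hcomm, hv, map_smul]
  rcases hirr _ hinv with h | h
  · exact absurd h hc
  · intro v
    have hv : v ∈ Module.End.eigenspace (ρ z) c := h ▸ Submodule.mem_top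
    exact Module.End.mem_eigenspace_iff.1 hv

lemma rep_pow_smul {G : Type*} [Group G] {V : Type} [AddCommGroup V] [Module ℂ V]
    (ρ : Representation ℂ G V) (z : G) (c : ℂ) (h : ∀ v, ρ z v = c • v) :
    ∀ (n : ℕ) (v : V), ρ (z ^ n) v = c ^ n • v := by
  intro n
  induction n with
  | zero => intro v; simp
  | succ n ih =>
    intro v
    rw [pow_succ, map_mul, Module.End.mul_apply, h, map_smul, ih, smul_smul,
      pow_succ, mul_comm]

lemma aux_frob (p : ℕ) [Fact p.Prime] (x : ZMod p) (e : ℕ) : x ^ (p ^ e) = x := by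
  induction e with
  | zero => simp
  | succ e ih => rw [pow_succ, pow_mul, ih, ZMod.pow_card]

lemma aux_fixed (p ℓ d : ℕ) (hp : p.Prime) (hℓ : 1 ≤ ℓ) (hd : d < ℓ)
    (α : MulAut (Multiplicative (ZMod (p ^ ℓ)))) (hα : α ^ (p ^ d) = 1) :
    α (Multiplicative.ofAdd ((p ^ (ℓ - 1) : ℕ) : ZMod (p ^ ℓ)))
      = Multiplicative.ofAdd ((p ^ (ℓ - 1) : ℕ) : ZMod (p ^ ℓ)) := by
  haveI : Fact p.Prime := ⟨hp⟩
  set a' : Multiplicative (ZMod (p ^ ℓ)) :=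
    Multiplicative.ofAdd ((p ^ (ℓ - 1) : ℕ) : ZMod (p ^ ℓ)) with ha'
  have hsplit : p * p ^ (ℓ - 1) = p ^ ℓ := by
    conv_rhs => rw [show ℓ = 1 + (ℓ - 1) by omega]
    rw [pow_add, pow_one]
  have ha'p : a' ^ p = 1 := by
    rw [ha', aux_ofAdd_pow]
    have : ((p : ℕ) : ZMod (p ^ ℓ)) * ((p ^ (ℓ - 1) : ℕ) : ZMod (p ^ ℓ))
        = ((p ^ ℓ : ℕ) : ZMod (p ^ ℓ)) := by rw [← Nat.cast_mul, hsplit]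
    rw [this, ZMod.natCast_self]
    rfl
  have ha'ne : a' ≠ 1 := by
    intro h
    have h2 : ((p ^ (ℓ - 1) : ℕ) : ZMod (p ^ ℓ)) = 0 := by
      have := congrArg Multiplicative.toAdd h
      simpa [ha'] using this
    have := (ZMod.natCast_eq_zero_iff _ _).1 h2
    have := (Nat.pow_dvd_pow_iff_le_right hp.one_lt).1 this
    omega
  have horder : orderOf a' = p := orderOf_eq_prime ha'p ha'ne
  have hαa'p : (α a') ^ p = 1 := by rw [← map_pow, ha'p, map_one]
  obtain ⟨c, hc⟩ := aux_exists_pow p ℓ hp hℓ (α a') hαa'p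
  have hiter : ∀ m : ℕ, (α ^ m) a' = a' ^ (c ^ m) := by
    intro m
    induction m with
    | zero => simp
    | succ m ih =>
      rw [pow_succ, MulAut.mul_apply, hc, ← ha', map_pow, ih, ← pow_mul, ← pow_succ]
  have hone : a' ^ (c ^ (p ^ d)) = a' ^ 1 := by
    have := hiter (p ^ d)
    rw [hα] at this
    simpa using this.symm
  have hmod : c ^ (p ^ d) ≡ 1 [MOD p] := by
    have := pow_eq_pow_iff_modEq.1 hone
    rwa [horder] at this
  have hc1 : (c : ZMod p) = 1 := by
    have h2 : ((c ^ (p ^ d) : ℕ) : ZMod p) = ((1 : ℕ) : ZMod p) :=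
      (ZMod.natCast_eq_natCast_iff _ _ _).2 hmod
    push_cast at h2
    rwa [aux_frob] at h2
  have hcmod : c ≡ 1 [MOD p] := by
    apply (ZMod.natCast_eq_natCast_iff _ _ _).1
    push_cast
    exact hc1
  rw [hc, ← ha']
  have : a' ^ c = a' ^ 1 := pow_eq_pow_iff_modEq.2 (by rwa [horder])
  simpa using this

end Aux

/-- Let `p` be a prime, `ℓ > 1`, and `α` an automorphism of `ℤ/p^ℓℤ` of order
`p^d` with `d < ℓ`.  For `k ≥ d` form `G = ℤ/p^kℤ ⋉ ℤ/p^ℓℤ` where the generator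
of `ℤ/p^kℤ` acts by `α`.  If `d < k`, then `G` has no faithful irreducible
finite-dimensional complex representation. -/
theorem semidirect_p_groups_not_faithful
    (p : ℕ) (hp : p.Prime) (ℓ k d : ℕ) (hℓ : 1 < ℓ) (hd : d < ℓ) (hdk : d < k)
    (α : MulAut (Multiplicative (ZMod (p ^ ℓ)))) (hα : orderOf α = p ^ d)
    (φ : Multiplicative (ZMod (p ^ k)) →* MulAut (Multiplicative (ZMod (p ^ ℓ))))
    (hφ : φ (Multiplicative.ofAdd 1) = α) :
    ∀ (V : Type) (_ : AddCommGroup V) (_ : Module ℂ V) (_ : FiniteDimensional ℂ V)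
      (_ : Nontrivial V)
      (ρ : Representation ℂ (Multiplicative (ZMod (p ^ ℓ)) ⋊[φ] Multiplicative (ZMod (p ^ k))) V),
      Function.Injective ρ → RepIrreducible ρ → False := by
  intro V _ _ _ _ ρ hinj hirr
  haveI : Fact p.Prime := ⟨hp⟩
  haveI : NeZero (p ^ k) := ⟨pow_ne_zero _ hp.ne_zero⟩
  haveI : NeZero (p ^ ℓ) := ⟨pow_ne_zero _ hp.ne_zero⟩
  haveI : NeZero p := ⟨hp.ne_zero⟩
  set a' : Multiplicative (ZMod (p ^ ℓ)) :=
    Multiplicative.ofAdd ((p ^ (ℓ - 1) : ℕ) : ZMod (p ^ ℓ)) with ha'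
  set b' : Multiplicative (ZMod (p ^ k)) :=
    Multiplicative.ofAdd ((p ^ (k - 1) : ℕ) : ZMod (p ^ k)) with hb'
  have hαpd : α ^ (p ^ d) = 1 := by rw [← hα]; exact pow_orderOf_eq_one α
  have hfix : α a' = a' := aux_fixed p ℓ d hp (by omega) hd α hαpd
  have hφfix : ∀ g : Multiplicative (ZMod (p ^ k)), φ g a' = a' := by
    intro g
    have hg : g = (Multiplicative.ofAdd (1 : ZMod (p ^ k))) ^ (Multiplicative.toAdd g).val := by
      rw [aux_ofAdd_pow, mul_one, ZMod.natCast_zmod_val]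
      simp
    rw [hg, map_pow, hφ]
    generalize (Multiplicative.toAdd g).val = n
    induction n with
    | zero => simp
    | succ n ih => rw [pow_succ, MulAut.mul_apply, hfix, ih]
  have hφb : φ b' = 1 := by
    have hb2 : b' = (Multiplicative.ofAdd (1 : ZMod (p ^ k))) ^ (p ^ (k - 1)) := by
      rw [aux_ofAdd_pow, mul_one]
    rw [hb2, map_pow, hφ]
    apply orderOf_dvd_iff_pow_eq_one.1
    rw [hα]
    exact pow_dvd_pow p (by omega)
  set a : Multiplicative (ZMod (p ^ ℓ)) ⋊[φ] Multiplicative (ZMod (p ^ k)) :=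
    SemidirectProduct.inl a' with ha
  set b : Multiplicative (ZMod (p ^ ℓ)) ⋊[φ] Multiplicative (ZMod (p ^ k)) :=
    SemidirectProduct.inr b' with hb
  have hacent : ∀ g, a * g = g * a := by
    intro g
    ext
    · simp [ha, hφfix, mul_comm]
    · simp [ha]
  have hbcent : ∀ g, b * g = g * b := by
    intro g
    ext
    · simp [hb, hφb]
    · simp [hb, mul_comm]
  obtain ⟨c, hcv⟩ := central_scalar ρ hirr a hacent
  obtain ⟨c', hc'v⟩ := central_scalar ρ hirr b hbcent
  obtain ⟨v0, hv0⟩ := exists_ne (0 : V)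
  have hap : a ^ p = 1 := by
    rw [ha, ← map_pow, ha', aux_ofAdd_pow_p p ℓ (by omega), map_one]
  have hbp : b ^ p = 1 := by
    rw [hb, ← map_pow, hb', aux_ofAdd_pow_p p k (by omega), map_one]
  have hscal : ∀ (z : _) (e : ℂ), (∀ v, ρ z v = e • v) → z ^ p = 1 → e ^ p = 1 := by
    intro z e hev hzp
    have h1 : ρ (z ^ p) v0 = e ^ p • v0 := rep_pow_smul ρ z e hev p v0
    rw [hzp, map_one] at h1
    have h2 : e ^ p • v0 = (1 : ℂ) • v0 := by rw [one_smul, ← h1]; rfl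
    exact smul_left_injective ℂ hv0 h2
  have hcp : c ^ p = 1 := hscal a c hcv hap
  have hc'p : c' ^ p = 1 := hscal b c' hc'v hbp
  have hcne : c ≠ 1 := by
    intro h1
    have heq : ρ a = ρ 1 := by
      ext v
      rw [map_one]
      show ρ a v = v
      rw [hcv, h1, one_smul]
    have : a = 1 := hinj heq
    have : a' = 1 := SemidirectProduct.inl_injective (φ := φ) (by rw [← ha, this]; rfl)
    exact aux_ofAdd_ne_one p ℓ hp (by omega) (ha' ▸ this)
  have horderc : orderOf c = p := orderOf_eq_prime hcp hcne
  have hprim : IsPrimitiveRoot c p := by rw [← horderc]; exact IsPrimitiveRoot.orderOf c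
  obtain ⟨j, -, hj⟩ := hprim.eq_pow_of_pow_eq_one hc'p
  have hba : b = a ^ j := by
    apply hinj
    ext v
    rw [hc'v, rep_pow_smul ρ a c hcv j v, hj]
  have hright := congrArg SemidirectProduct.right hba
  rw [ha, ← map_pow] at hright
  simp only [hb, SemidirectProduct.right_inr, SemidirectProduct.right_inl] at hright
  exact aux_ofAdd_ne_one p k hp (by omega) (hb' ▸ hright)
end
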